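/- arXiv:math/9911155 — 4 statements merged into one kernel-verified Lean document; each statement's English description precedes it below -/
import Mathlib

section
/- Let x ∈ X. Then ⟨x,x⟩ is a projection in A if and only if x·⟨x,x⟩ = x. (This is the module-level form of Lemma 2.1: the 'rank-one' operator θ_{x,x} : z ↦ x·⟨x,z⟩ is a projection in the adjointable operators of X if and only if ⟨x,x⟩ is a projection in A.) -/
/-- A right Hilbert C*-module structure on `X` over the C*-algebra `A`:
`X` is a right `A`-module with an `A`-valued inner product satisfying
`⟨x,y⟩* = ⟨y,x⟩`, `⟨x, y·a⟩ = ⟨x,y⟩·a`, `⟨x,x⟩ ≥ 0`, and the norm of `X`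
satisfies `‖x‖² = ‖⟨x,x⟩‖` (so completeness of `X` is completeness for this norm). -/
structure CStarModuleStr (A X : Type*) [NormedRing A] [StarRing A] [CStarRing A]
    [PartialOrder A] [StarOrderedRing A] [NormedAddCommGroup X] where
  smul : X → A → X
  inner : X → X → A
  add_smul : ∀ x y a, smul (x + y) a = smul x a + smul y a
  smul_add : ∀ x a b, smul x (a + b) = smul x a + smul x b
  smul_mul : ∀ x a b, smul (smul x a) b = smul x (a * b)
  inner_add_left : ∀ x y z, inner (x + y) z = inner x z + inner y z
  inner_add_right : ∀ x y z, inner x (y + z) = inner x y + inner x z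
  star_inner : ∀ x y, star (inner x y) = inner y x
  inner_smul_right : ∀ x y a, inner x (smul y a) = inner x y * a
  inner_self_nonneg : ∀ x, 0 ≤ inner x x
  norm_sq_eq : ∀ x, ‖x‖ ^ 2 = ‖inner x x‖

variable {A X : Type*} [NormedRing A] [StarRing A] [CStarRing A]
  [PartialOrder A] [StarOrderedRing A] [CompleteSpace A]
  [NormedAddCommGroup X] [CompleteSpace X]

/-- **Lemma 2.1 (module form).** For `x ∈ X`, the inner product `⟨x,x⟩` is a
projection in `A` if and only if `x·⟨x,x⟩ = x`. -/
theorem inner_self_isProjection_iff_smul_inner_self_eq (M : CStarModuleStr A X) (x : X) :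
    (M.inner x x * M.inner x x = M.inner x x ∧ star (M.inner x x) = M.inner x x) ↔
      M.smul x (M.inner x x) = x := by
  have hsl : ∀ u v a, M.inner (M.smul u a) v = star a * M.inner u v := by
    intro u v a
    rw [← M.star_inner v (M.smul u a), M.inner_smul_right, star_mul, M.star_inner]
  have hsub : ∀ u v w : X, M.inner (u - v) w = M.inner u w - M.inner v w := by
    intro u v w
    have h := M.inner_add_left (u - v) v w
    rw [sub_add_cancel] at h
    exact eq_sub_of_add_eq h.symm
  have hsubr : ∀ u v w : X, M.inner u (v - w) = M.inner u v - M.inner u w := by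
    intro u v w
    have h := M.inner_add_right u (v - w) w
    rw [sub_add_cancel] at h
    exact eq_sub_of_add_eq h.symm
  set p := M.inner x x with hpdef
  have hp : star p = p := M.star_inner x x
  constructor
  · rintro ⟨h1, -⟩
    have key : M.inner (M.smul x p - x) (M.smul x p - x) = 0 := by
      rw [hsub, hsubr, hsubr, hsl, hsl, M.inner_smul_right, hp, ← hpdef]
      rw [← mul_assoc]
      rw [h1, h1]
      abel
    have hn : ‖M.smul x p - x‖ ^ 2 = 0 := by rw [M.norm_sq_eq, key, norm_zero]
    have : M.smul x p - x = 0 := by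
      have := pow_eq_zero_iff (n := 2) (by norm_num) |>.mp hn
      exact norm_eq_zero.mp this
    exact sub_eq_zero.mp this
  · intro h
    refine ⟨?_, hp⟩
    have := M.inner_smul_right x x p
    rw [h] at this
    rw [← hpdef] at this
    exact this.symm
end

section
/- Let p ∈ A be a projection and let x, y ∈ S_p(X) generate the same submodule, i.e. {x·a : a ∈ A} = {y·a : a ∈ A}. Then u := ⟨x,y⟩ satisfies u*u = uu* = p (so u is a unitary of the corner algebra pAp) and x·u = y. -/
variable {A X : Type*} [NormedRing A] [StarRing A] [CStarRing A]
  [PartialOrder A] [StarOrderedRing A] [CompleteSpace A]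
  [NormedAddCommGroup X] [CompleteSpace X]

namespace CStarModuleStr

variable {A X : Type*} [NormedRing A] [StarRing A] [CStarRing A] [PartialOrder A]
  [StarOrderedRing A] [NormedAddCommGroup X] (M : CStarModuleStr A X)

theorem inner_sub_left (x y z : X) : M.inner (x - y) z = M.inner x z - M.inner y z := by
  rw [eq_sub_iff_add_eq, ← M.inner_add_left, sub_add_cancel]

theorem inner_sub_right (x y z : X) : M.inner x (y - z) = M.inner x y - M.inner x z := by
  rw [eq_sub_iff_add_eq, ← M.inner_add_right, sub_add_cancel]

theorem inner_smul_left (x y : X) (a : A) : M.inner (M.smul x a) y = star a * M.inner x y := by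
  rw [← M.star_inner, M.inner_smul_right, star_mul, M.star_inner]

theorem eq_zero_of_inner_self_eq_zero {x : X} (hx : M.inner x x = 0) : x = 0 := by
  have h := M.norm_sq_eq x
  rwa [hx, norm_zero, sq_eq_zero_iff, norm_eq_zero] at h

-- With `p = ⟨x,x⟩`: `⟨xp - x, xp - x⟩ = p³ - 2p² + p = 0`.
theorem smul_inner_self_of_isIdempotentElem {x : X} (hx : IsIdempotentElem (M.inner x x)) :
    M.smul x (M.inner x x) = x := by
  refine sub_eq_zero.mp (M.eq_zero_of_inner_self_eq_zero ?_)
  simp only [inner_sub_left, inner_sub_right, inner_smul_left, inner_smul_right, M.star_inner,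
    hx.eq, sub_self, zero_mul]

theorem self_mem_range_smul_of_isIdempotentElem {x : X} (hx : IsIdempotentElem (M.inner x x)) :
    x ∈ {z : X | ∃ a : A, z = M.smul x a} :=
  ⟨M.inner x x, (M.smul_inner_self_of_isIdempotentElem hx).symm⟩

theorem smul_inner_of_mem_range_smul {x y : X} (hx : IsIdempotentElem (M.inner x x))
    (hy : y ∈ {z : X | ∃ a : A, z = M.smul x a}) : M.smul x (M.inner x y) = y := by
  obtain ⟨a, rfl⟩ := hy
  rw [M.inner_smul_right, ← M.smul_mul, M.smul_inner_self_of_isIdempotentElem hx]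

theorem star_inner_mul_inner_of_smul_inner {x y : X} (hxy : M.smul x (M.inner x y) = y) :
    star (M.inner x y) * M.inner x y = M.inner y y := by
  have hu : M.inner x x * M.inner x y = M.inner x y := by
    conv_rhs => rw [← hxy, M.inner_smul_right]
  conv_rhs => rw [← hxy, M.inner_smul_left, M.inner_smul_right, hu]

end CStarModuleStr

theorem same_submodule_inner_unitary_general (M : CStarModuleStr A X) (p : A)
    (hp : p * p = p) (x y : X)
    (hx : M.inner x x = p) (hy : M.inner y y = p)
    (hgen : {z : X | ∃ a : A, z = M.smul x a} = {z : X | ∃ a : A, z = M.smul y a}) :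
    star (M.inner x y) * M.inner x y = p ∧
      M.inner x y * star (M.inner x y) = p ∧
      M.smul x (M.inner x y) = y := by
  have hxp : IsIdempotentElem (M.inner x x) := hx ▸ hp
  have hyp : IsIdempotentElem (M.inner y y) := hy ▸ hp
  have hxy : M.smul x (M.inner x y) = y :=
    M.smul_inner_of_mem_range_smul hxp (hgen ▸ M.self_mem_range_smul_of_isIdempotentElem hyp)
  have hyx : M.smul y (M.inner y x) = x :=
    M.smul_inner_of_mem_range_smul hyp (hgen.symm ▸ M.self_mem_range_smul_of_isIdempotentElem hxp)
  refine ⟨by rw [M.star_inner_mul_inner_of_smul_inner hxy, hy], ?_, hxy⟩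
  rw [← hx, ← M.star_inner_mul_inner_of_smul_inner hyx, ← M.star_inner x y, star_star]

/-- If `x, y ∈ S_p(X)` generate the same submodule, then `u := ⟨x,y⟩` satisfies
`u*u = uu* = p` (a unitary of the corner algebra `pAp`) and `x·u = y`. -/
theorem same_submodule_inner_unitary (M : CStarModuleStr A X) (p : A)
    (hp : p * p = p) (hps : star p = p) (x y : X)
    (hx : M.inner x x = p) (hy : M.inner y y = p)
    (hgen : {z : X | ∃ a : A, z = M.smul x a} = {z : X | ∃ a : A, z = M.smul y a}) :
    star (M.inner x y) * M.inner x y = p ∧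
      M.inner x y * star (M.inner x y) = p ∧
      M.smul x (M.inner x y) = y :=
  same_submodule_inner_unitary_general M p hp x y hx hy hgen
end

section
/- Let p, q ∈ A be projections, x ∈ S_p(X) and y ∈ S_q(X), and suppose x·⟨x,z⟩ = y·⟨y,z⟩ for all z ∈ X (i.e. the rank-one projections θ_{x,x} and θ_{y,y} coincide). Then v := ⟨x,y⟩ satisfies vv* = p and v*v = q; in particular p and q are Murray–von Neumann equivalent. -/
namespace CStarModuleStr

variable {A X : Type*} [NormedRing A] [StarRing A] [CStarRing A] [PartialOrder A]
  [StarOrderedRing A] [NormedAddCommGroup X] (M : CStarModuleStr A X)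

/-- The paper's `θ_{x,y}`. -/
def rankOne (x y : X) : X → X := fun z => M.smul x (M.inner y z)

theorem inner_rankOne (w x y z : X) :
    M.inner w (M.rankOne x y z) = M.inner w x * M.inner y z :=
  M.inner_smul_right w x _

theorem inner_mul_inner_eq_of_rankOne_eq {x y : X} (h : M.rankOne x x = M.rankOne y y)
    (w z : X) : M.inner w x * M.inner x z = M.inner w y * M.inner y z := by
  rw [← inner_rankOne, ← inner_rankOne, h]

end CStarModuleStr

variable {A X : Type*} [NormedRing A] [StarRing A] [CStarRing A]
  [PartialOrder A] [StarOrderedRing A] [CompleteSpace A]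
  [NormedAddCommGroup X] [CompleteSpace X]

theorem theta_eq_implies_mvn_equiv_general (M : CStarModuleStr A X) (p q : A)
    (hp : p * p = p) (hq : q * q = q)
    (x y : X) (hx : M.inner x x = p) (hy : M.inner y y = q)
    (h : ∀ z : X, M.smul x (M.inner x z) = M.smul y (M.inner y z)) :
    M.inner x y * star (M.inner x y) = p ∧ star (M.inner x y) * M.inner x y = q := by
  have hxy : star (M.inner x y) = M.inner y x := M.star_inner x y
  have key := M.inner_mul_inner_eq_of_rankOne_eq (funext h)
  constructor
  · rw [hxy, ← key, hx, hp]
  · rw [hxy, key, hy, hq]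

/-- **Proposition 2.6 (claim in part 2).** If `x ∈ S_p(X)` and `y ∈ S_q(X)` have
`θ_{x,x} = θ_{y,y}` (i.e. `x·⟨x,z⟩ = y·⟨y,z⟩` for all `z`), then `v := ⟨x,y⟩`
satisfies `vv* = p` and `v*v = q`; in particular `p` and `q` are Murray–von Neumann
equivalent. -/
theorem theta_eq_implies_mvn_equiv (M : CStarModuleStr A X) (p q : A)
    (hp : p * p = p) (hps : star p = p) (hq : q * q = q) (hqs : star q = q)
    (x y : X) (hx : M.inner x x = p) (hy : M.inner y y = q)
    (h : ∀ z : X, M.smul x (M.inner x z) = M.smul y (M.inner y z)) :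
    M.inner x y * star (M.inner x y) = p ∧ star (M.inner x y) * M.inner x y = q :=
  theta_eq_implies_mvn_equiv_general M p q hp hq x y hx hy h
end

section
/- Let s be the unilateral shift on ℓ²(ℕ) (s e_n = e_{n+1} for the standard orthonormal basis) and p = s s*. Then s* belongs to the p-sphere of the Hilbert module B(ℓ²(ℕ)) over itself (that is, (s*)* s* = s s* = p), but there is no isometry v ∈ B(ℓ²(ℕ)) (v*v = 1) with v·p = s*. (Hence the map m_p : S_1(B(H)) → S_p(B(H)), v ↦ v·p, need not be surjective.) -/
/-!
If an isometry `v` satisfies `v (s s*) = s*` for an isometry `s`, then multiplying on the right by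
`s` gives `v s = 1`, so `v* = v* v s = s`; hence `s s* = v* v = 1` and `s` would be unitary.
The unilateral shift is not, since `e₀` is orthogonal to its range.
-/

theorem mul_star_self_eq_one_of_isometry_mul_eq_star {R : Type*} [Monoid R] [StarMul R]
    {s v : R} (hs : star s * s = 1) (hv : star v * v = 1) (hvs : v * (s * star s) = star s) :
    s * star s = 1 := by
  have hvs_one : v * s = 1 := by
    simpa only [mul_assoc, hs, mul_one] using congrArg (· * s) hvs
  obtain rfl : star v = s := left_inv_eq_right_inv hv hvs_one
  rwa [star_star]

theorem lp.shift_apply_zero {𝕜 : Type*} [NormedField 𝕜] {p : ENNReal} [Fact (1 ≤ p)]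
    (hp : p ≠ ⊤) (s : lp (fun _ : ℕ => 𝕜) p →L[𝕜] lp (fun _ : ℕ => 𝕜) p)
    (hshift : ∀ n : ℕ, s (lp.single p n 1) = lp.single p (n + 1) 1)
    (y : lp (fun _ : ℕ => 𝕜) p) : s y 0 = 0 := by
  suffices (lp.evalCLM 𝕜 (fun _ : ℕ => 𝕜) p 0).comp s = 0 from
    congrArg (fun φ : lp (fun _ : ℕ => 𝕜) p →L[𝕜] 𝕜 => φ y) this
  refine lp.ext_continuousLinearMap hp fun n => ContinuousLinearMap.ext_ring ?_
  simp [lp.evalCLM, hshift]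

theorem shift_mul_star_ne_one (s : lp (fun _ : ℕ => ℂ) 2 →L[ℂ] lp (fun _ : ℕ => ℂ) 2)
    (hshift : ∀ n : ℕ, s (lp.single 2 n (1 : ℂ)) = lp.single 2 (n + 1) (1 : ℂ)) :
    s * star s ≠ 1 := by
  intro h
  have he₀ : s (star s (lp.single 2 0 1)) = lp.single 2 0 1 := by
    simpa using congrArg (fun a => a (lp.single 2 0 (1 : ℂ))) h
  have := congrArg (fun f : lp (fun _ : ℕ => ℂ) 2 => f 0) he₀
  simp [lp.shift_apply_zero ENNReal.ofNat_ne_top s hshift] at this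

/-- The unilateral shift `s` on `ℓ²(ℕ)` and `p = s s*`: the co-isometry `s*` lies in
the `p`-sphere of `B(ℓ²(ℕ))` (that is, `(s*)* s* = s s* = p`), but there is no
isometry `v` with `v·p = s*`; hence `m_p : S₁(B(H)) → S_p(B(H))`, `v ↦ v·p`, need
not be surjective. -/
theorem shift_adjoint_not_in_range_of_mp
    (s : lp (fun _ : ℕ => ℂ) 2 →L[ℂ] lp (fun _ : ℕ => ℂ) 2)
    (hshift : ∀ n : ℕ, s (lp.single 2 n (1 : ℂ)) = lp.single 2 (n + 1) (1 : ℂ))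
    (hiso : star s * s = 1) :
    star (star s) * star s = s * star s ∧
      ¬ ∃ v : lp (fun _ : ℕ => ℂ) 2 →L[ℂ] lp (fun _ : ℕ => ℂ) 2,
        star v * v = 1 ∧ v * (s * star s) = star s := by
  refine ⟨by rw [star_star], ?_⟩
  rintro ⟨v, hv, hvs⟩
  exact shift_mul_star_ne_one s hshift (mul_star_self_eq_one_of_isometry_mul_eq_star hiso hv hvs)
end
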